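/- Every embedding σ of the graph G = C₃ ∪ C₄ in its complement yields the same graph G ⊕ σ(G) up to isomorphism; that is, C₃ ∪ C₄ is uniquely embeddable, and moreover it does admit at least one embedding. -/

import Mathlib

open SimpleGraph

/-- The cycle graph on `ZMod n`: `i` and `j` adjacent iff they differ by one. -/
def CycGraph (n : ℕ) : SimpleGraph (ZMod n) where
  Adj i j := i ≠ j ∧ (i = j + 1 ∨ j = i + 1)
  symm := by constructor; rintro i j ⟨hne, h⟩; exact ⟨hne.symm, h.symm⟩
  loopless := by constructor; rintro i ⟨hne, _⟩; exact hne rfl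

/-- `σ` is an embedding of `G` into its complement. -/
def IsGraphEmbedding {V : Type*} (G : SimpleGraph V) (σ : Equiv.Perm V) : Prop :=
  ∀ x y, G.Adj x y → ¬ G.Adj (σ x) (σ y)

/-- The edge sum `G ⊕ σ(G)`. -/
def EdgeSum {V : Type*} (G : SimpleGraph V) (σ : Equiv.Perm V) : SimpleGraph V :=
  G ⊔ G.map σ.toEmbedding

/-- Vertex-disjoint union of two graphs. -/
def DisjUnion {α β : Type*} (G : SimpleGraph α) (H : SimpleGraph β) :
    SimpleGraph (α ⊕ β) where
  Adj x y :=
    (∃ a b, x = Sum.inl a ∧ y = Sum.inl b ∧ G.Adj a b) ∨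
    (∃ a b, x = Sum.inr a ∧ y = Sum.inr b ∧ H.Adj a b)
  symm := by
    constructor
    rintro x y (⟨a, b, rfl, rfl, h⟩ | ⟨a, b, rfl, rfl, h⟩)
    · exact Or.inl ⟨b, a, rfl, rfl, h.symm⟩
    · exact Or.inr ⟨b, a, rfl, rfl, h.symm⟩
  loopless := by
    constructor
    rintro x (⟨a, b, rfl, h, hadj⟩ | ⟨a, b, rfl, h, hadj⟩) <;>
      · cases h; exact hadj.ne rfl

/-!
An embedding `σ` of `G = C₃ ∪ C₄` sends the triangle onto a triangle of `Gᶜ`; every such triangle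
has the form `{t, q, q + 2}` with `t ∈ C₃` and `q ∈ C₄`, and the four remaining vertices span
`K₄` minus an edge in `Gᶜ`, which contains a single `4`-cycle. So `σ(G)` is the image of `σ₀(G)`,
for one fixed embedding `σ₀`, under a rotation of both cycles, i.e. `σ ∈ Aut(G) σ₀ Aut(G)`.
Multiplying `σ` by automorphisms of `G` on either side changes `G ⊕ σ(G)` only up to isomorphism.
-/

section EdgeSum

variable {V : Type*} {G : SimpleGraph V}

lemma edgeSum_adj {σ : Equiv.Perm V} {a b : V} :
    (EdgeSum G σ).Adj a b ↔ G.Adj a b ∨ G.Adj (σ.symm a) (σ.symm b) := by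
  rw [EdgeSum, sup_adj, ← comap_symm, comap_adj]
  rfl

lemma IsGraphEmbedding.compl_adj {σ : Equiv.Perm V} (hσ : IsGraphEmbedding G σ) {x y : V}
    (h : G.Adj x y) : Gᶜ.Adj (σ x) (σ y) :=
  ⟨σ.injective.ne h.ne, hσ x y h⟩

def edgeSumMulIso (ρ β : G ≃g G) (σ : Equiv.Perm V) :
    EdgeSum G (ρ.toEquiv * σ * β.toEquiv) ≃g EdgeSum G σ where
  toEquiv := ρ.symm.toEquiv
  map_rel_iff' {a b} := by
    have hsymm : ∀ x, (ρ.toEquiv * σ * β.toEquiv).symm x = β.symm (σ.symm (ρ.symm x)) :=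
      fun _ ↦ rfl
    simp only [edgeSum_adj, hsymm, RelIso.coe_fn_toEquiv, Iso.map_adj_iff]

end EdgeSum

section DisjUnion

variable {α β α' β' : Type*} {G : SimpleGraph α} {H : SimpleGraph β}

@[simp] lemma disjUnion_adj_inl_inl {a b : α} :
    (DisjUnion G H).Adj (.inl a) (.inl b) ↔ G.Adj a b := by
  simp [DisjUnion]

@[simp] lemma disjUnion_adj_inr_inr {a b : β} :
    (DisjUnion G H).Adj (.inr a) (.inr b) ↔ H.Adj a b := by
  simp [DisjUnion]

@[simp] lemma disjUnion_not_adj_inl_inr {a : α} {b : β} :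
    ¬ (DisjUnion G H).Adj (.inl a) (.inr b) := by
  simp [DisjUnion]

@[simp] lemma disjUnion_not_adj_inr_inl {a : β} {b : α} :
    ¬ (DisjUnion G H).Adj (.inr a) (.inl b) := by
  simp [DisjUnion]

instance [DecidableRel G.Adj] [DecidableRel H.Adj] : DecidableRel (DisjUnion G H).Adj
  | .inl _, .inl _ => decidable_of_iff _ disjUnion_adj_inl_inl.symm
  | .inr _, .inr _ => decidable_of_iff _ disjUnion_adj_inr_inr.symm
  | .inl _, .inr _ => isFalse disjUnion_not_adj_inl_inr
  | .inr _, .inl _ => isFalse disjUnion_not_adj_inr_inl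

def DisjUnion.congr {G' : SimpleGraph α'} {H' : SimpleGraph β'} (e : G ≃g G') (f : H ≃g H') :
    DisjUnion G H ≃g DisjUnion G' H' where
  toEquiv := Equiv.sumCongr e.toEquiv f.toEquiv
  map_rel_iff' {x y} := by
    rcases x with a | a <;> rcases y with b | b <;> simp [Iso.map_adj_iff]

end DisjUnion

instance (n : ℕ) : DecidableRel (CycGraph n).Adj := fun i j ↦
  inferInstanceAs (Decidable (i ≠ j ∧ (i = j + 1 ∨ j = i + 1)))

def CycGraph.rotate (n : ℕ) (c : ZMod n) : CycGraph n ≃g CycGraph n where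
  toEquiv := Equiv.addRight c
  map_rel_iff' {i j} := by
    simp [CycGraph, add_right_comm _ c]

abbrev V34 := ZMod 3 ⊕ ZMod 4

abbrev C34 : SimpleGraph V34 := DisjUnion (CycGraph 3) (CycGraph 4)

namespace C34

def rotate (t : ZMod 3) (q : ZMod 4) : C34 ≃g C34 :=
  DisjUnion.congr (CycGraph.rotate 3 t) (CycGraph.rotate 4 q)

/-- `σ₀(G)` has the triangle `{0, 0', 2'}` and the 4-cycle `1 – 1' – 2 – 3'`, primes marking `C₄`. -/
def σ₀ : Equiv.Perm V34 := Equiv.swap (.inl 1) (.inr 0) * Equiv.swap (.inl 2) (.inr 2)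

theorem isGraphEmbedding_σ₀ : IsGraphEmbedding C34 σ₀ := by
  unfold IsGraphEmbedding
  decide

/- Exhaustive check over the images `aᵢ = σ (inl i)`, `bⱼ = σ (inr j)` of an embedding `σ`; each
hypothesis follows the quantifier it constrains, so that `decide` prunes the search early. -/
set_option synthInstance.maxSize 1000 in
theorem images_mem_doubleCoset :
    ∀ a₀ a₁ : V34, C34ᶜ.Adj a₀ a₁ → ∀ a₂ : V34, C34ᶜ.Adj a₁ a₂ → C34ᶜ.Adj a₂ a₀ →
    ∀ b₀ : V34, b₀ ∉ ({a₀, a₁, a₂} : Finset V34) →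
    ∀ b₁ : V34, C34ᶜ.Adj b₀ b₁ → b₁ ∉ ({a₀, a₁, a₂} : Finset V34) →
    ∀ b₂ : V34, C34ᶜ.Adj b₁ b₂ → b₂ ∉ ({a₀, a₁, a₂, b₀} : Finset V34) →
    ∀ b₃ : V34, C34ᶜ.Adj b₂ b₃ → C34ᶜ.Adj b₃ b₀ → b₃ ∉ ({a₀, a₁, a₂, b₁} : Finset V34) →
    ∃ t q, ∀ u v, C34.Adj u v ↔
      C34.Adj (((rotate t q).toEquiv * σ₀).symm (Sum.elim ![a₀, a₁, a₂] ![b₀, b₁, b₂, b₃] u))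
        (((rotate t q).toEquiv * σ₀).symm (Sum.elim ![a₀, a₁, a₂] ![b₀, b₁, b₂, b₃] v)) := by
  decide

theorem exists_eq_mul_σ₀_mul {σ : Equiv.Perm V34} (hσ : IsGraphEmbedding C34 σ) :
    ∃ ρ β : C34 ≃g C34, σ = ρ.toEquiv * σ₀ * β.toEquiv := by
  have hσ_eq : Sum.elim ![σ (.inl 0), σ (.inl 1), σ (.inl 2)]
      ![σ (.inr 0), σ (.inr 1), σ (.inr 2), σ (.inr 3)] = σ := by
    ext (i | j)
    · fin_cases i <;> rfl
    · fin_cases j <;> rfl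
  have himages := images_mem_doubleCoset
    (σ (.inl 0)) (σ (.inl 1)) ?_ (σ (.inl 2)) ?_ ?_ (σ (.inr 0)) ?_ (σ (.inr 1)) ?_ ?_
    (σ (.inr 2)) ?_ ?_ (σ (.inr 3)) ?_ ?_ ?_
  any_goals first
    | exact hσ.compl_adj (by decide)
    | simp only [σ.injective.eq_iff, Finset.mem_insert, Finset.mem_singleton]; decide
  obtain ⟨t, q, hβ⟩ := himages
  rw [hσ_eq] at hβ
  exact ⟨rotate t q, ⟨((rotate t q).toEquiv * σ₀)⁻¹ * σ, (hβ _ _).symm⟩, by group⟩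

end C34

/-- `C₃ ∪ C₄` is embeddable in its complement and uniquely embeddable: all edge-sum graphs
over embeddings are pairwise isomorphic. -/
theorem c3_c4_uniquely_embeddable :
    (∃ σ : Equiv.Perm (ZMod 3 ⊕ ZMod 4),
        IsGraphEmbedding (DisjUnion (CycGraph 3) (CycGraph 4)) σ) ∧
    ∀ σ₁ σ₂ : Equiv.Perm (ZMod 3 ⊕ ZMod 4),
      IsGraphEmbedding (DisjUnion (CycGraph 3) (CycGraph 4)) σ₁ →
      IsGraphEmbedding (DisjUnion (CycGraph 3) (CycGraph 4)) σ₂ →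
      Nonempty (EdgeSum (DisjUnion (CycGraph 3) (CycGraph 4)) σ₁ ≃g
        EdgeSum (DisjUnion (CycGraph 3) (CycGraph 4)) σ₂) := by
  refine ⟨⟨C34.σ₀, C34.isGraphEmbedding_σ₀⟩, fun σ₁ σ₂ h₁ h₂ ↦ ?_⟩
  obtain ⟨ρ₁, β₁, rfl⟩ := C34.exists_eq_mul_σ₀_mul h₁
  obtain ⟨ρ₂, β₂, rfl⟩ := C34.exists_eq_mul_σ₀_mul h₂
  exact ⟨(edgeSumMulIso ρ₁ β₁ C34.σ₀).trans (edgeSumMulIso ρ₂ β₂ C34.σ₀).symm⟩
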